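/- Let D be the unit disc and B the Bergman projection of L^2(D). There exists an absolute constant a > 0 such that for every f in L^2(D) supported in the closed disc of radius 1/2: integral_D |f - B(f)|^2 >= a * integral_D |f|^2. -/

import Mathlib

/-!
For `h` holomorphic on the disc, the mean value property of `h²` on the circle of radius
`r ∈ (3/4, 7/8)` bounds `‖h w‖²`, for `‖w‖ ≤ 1/2`, by three times the circle average
of `‖h‖²`. Integrating in `r` (polar coordinates) and then in `w` gives
`∫_D ‖h‖² ≤ 5 ∫_{D ∖ ½D} ‖h‖²`. If `f` vanishes off `½D`, then `f - g = -g` on `D ∖ ½D`,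
so `‖g‖² ≤ 5 ‖f - g‖²` and hence `‖f‖ ≤ 4 ‖f - g‖` for every `g` in the Bergman space.
This is a closed condition on `g`, so it holds on the closure, in particular for `g = B f`;
thus `a = 1/16` works.
-/

open MeasureTheory Metric

section DiscEstimate

open Set Real

theorem norm_circleAverage_le {E : Type*} [NormedAddCommGroup E] [NormedSpace ℝ E]
    (f : ℂ → E) (c : ℂ) (R : ℝ) :
    ‖Real.circleAverage f c R‖ ≤ Real.circleAverage (fun z ↦ ‖f z‖) c R := by
  rw [circleAverage_def, circleAverage_def, norm_smul, smul_eq_mul, norm_inv,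
    Real.norm_of_nonneg two_pi_pos.le]
  gcongr
  exact intervalIntegral.norm_integral_le_integral_norm two_pi_pos.le

theorem DiffContOnCl.norm_le_mul_circleAverage_norm {E : Type*} [NormedAddCommGroup E]
    [NormedSpace ℂ E] [CompleteSpace E] {f : ℂ → E} {c w : ℂ} {R : ℝ}
    (hf : DiffContOnCl ℂ f (ball c R)) (hw : w ∈ ball c R) :
    ‖f w‖ ≤ R / (R - dist w c) * Real.circleAverage (fun z ↦ ‖f z‖) c R := by
  have hR : 0 < R := pos_of_mem_ball hw
  have hRabs : |R| = R := abs_of_pos hR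
  have hwc : dist w c < R := hw
  have hsphere : sphere c |R| ⊆ closure (ball c R) := by
    rw [hRabs, closure_ball c hR.ne']
    exact sphere_subset_closedBall
  have hkernel : ∀ z ∈ sphere c |R|, ‖(z - c) / (z - w)‖ ≤ R / (R - dist w c) := by
    intro z hz
    rw [hRabs, mem_sphere_iff_norm] at hz
    have hzw : R - dist w c ≤ ‖z - w‖ := by
      have := norm_sub_norm_le (z - c) (w - c)
      rw [sub_sub_sub_cancel_right, hz, ← dist_eq_norm] at this
      linarith
    rw [norm_div, hz]
    gcongr
  have hfR : ContinuousOn (fun z ↦ ‖f z‖) (sphere c |R|) := (hf.2.mono hsphere).norm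
  have hkR : ContinuousOn (fun z ↦ ‖((z - c) / (z - w)) • f z‖) (sphere c |R|) := by
    refine (ContinuousOn.smul ?_ (hf.2.mono hsphere)).norm
    refine (continuousOn_id.sub continuousOn_const).div (continuousOn_id.sub continuousOn_const)
      fun z hz ↦ sub_ne_zero.2 ?_
    rintro rfl
    rw [hRabs, mem_sphere] at hz
    linarith
  calc ‖f w‖ = ‖Real.circleAverage (fun z ↦ ((z - c) / (z - w)) • f z) c R‖ := by
        rw [← hRabs] at hf hw
        rw [hf.circleAverage_smul_div hw]
    _ ≤ Real.circleAverage (fun z ↦ ‖((z - c) / (z - w)) • f z‖) c R :=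
        norm_circleAverage_le _ _ _
    _ ≤ Real.circleAverage (fun z ↦ R / (R - dist w c) * ‖f z‖) c R := by
        refine circleAverage_mono hkR.circleIntegrable'
          (continuousOn_const.mul hfR).circleIntegrable' fun z hz ↦ ?_
        rw [norm_smul]
        gcongr
        exact hkernel z hz
    _ = R / (R - dist w c) * Real.circleAverage (fun z ↦ ‖f z‖) c R := by
        simp only [← smul_eq_mul, circleAverage_fun_smul]

theorem Complex.polarCoord_symm_eq_circleMap (r θ : ℝ) :
    Complex.polarCoord.symm (r, θ) = circleMap 0 r θ := by
  rw [Complex.polarCoord_symm_apply, circleMap, Complex.exp_mul_I]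
  push_cast
  ring

theorem polarCoord_target_inter_preimage_annulus {a b : ℝ} (ha : 0 ≤ a) :
    polarCoord.target ∩ Complex.polarCoord.symm ⁻¹' (ball 0 b \ closedBall 0 a) =
      Ioo a b ×ˢ Ioo (-π) π := by
  ext ⟨r, θ⟩
  simp only [polarCoord_target, mem_inter_iff, mem_prod, mem_Ioi, mem_Ioo, mem_preimage,
    mem_sdiff, mem_ball_zero_iff, mem_closedBall_zero_iff, Complex.norm_polarCoord_symm, not_le]
  constructor
  · rintro ⟨⟨hr, hθ⟩, hb, ha'⟩
    rw [abs_of_pos hr] at hb ha'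
    exact ⟨⟨ha', hb⟩, hθ⟩
  · rintro ⟨⟨ha', hb⟩, hθ⟩
    have hr : 0 < r := ha.trans_lt ha'
    rw [abs_of_pos hr]
    exact ⟨⟨hr, hθ⟩, hb, ha'⟩

theorem integral_Ioo_circleMap_eq_circleAverage {E : Type*} [NormedAddCommGroup E]
    [NormedSpace ℝ E] (F : ℂ → E) (r : ℝ) :
    ∫ θ in Ioo (-π) π, F (circleMap 0 r θ) = (2 * π) • circleAverage F 0 r := by
  rw [circleAverage_eq_integral_add (-π), smul_inv_smul₀ two_pi_pos.ne',
    intervalIntegral.integral_comp_add_right (fun θ ↦ F (circleMap 0 r θ)),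
    ← integral_Ioc_eq_integral_Ioo, ← intervalIntegral.integral_of_le (by linarith [pi_pos])]
  ring_nf

theorem integral_annulus_eq_integral_circleAverage {E : Type*} [NormedAddCommGroup E]
    [NormedSpace ℝ E] {F : ℂ → E} {a b : ℝ} (ha : 0 ≤ a)
    (hF : ContinuousOn F (closedBall 0 b)) :
    ∫ z in ball 0 b \ closedBall 0 a, F z =
      ∫ r in Ioo a b, (2 * π * r) • circleAverage F 0 r := by
  set S : Set ℂ := ball 0 b \ closedBall 0 a
  have hS : MeasurableSet S := measurableSet_ball.diff measurableSet_closedBall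
  have hmaps : MapsTo Complex.polarCoord.symm (Icc a b ×ˢ Icc (-π) π) (closedBall 0 b) := by
    rintro ⟨r, θ⟩ ⟨hr, -⟩
    rw [mem_closedBall_zero_iff, Complex.norm_polarCoord_symm, abs_of_nonneg (ha.trans hr.1)]
    exact hr.2
  have hpolar : Continuous Complex.polarCoord.symm := by
    simp only [funext Complex.polarCoord_symm_apply]
    fun_prop
  have hint : IntegrableOn (fun p : ℝ × ℝ ↦ p.1 • F (Complex.polarCoord.symm p))
      (Ioo a b ×ˢ Ioo (-π) π) (volume.prod volume) := by
    refine ContinuousOn.integrableOn_compact (isCompact_Icc.prod isCompact_Icc)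
      (continuous_fst.continuousOn.smul (hF.comp hpolar.continuousOn hmaps))
      |>.mono_set (prod_mono Ioo_subset_Icc_self Ioo_subset_Icc_self)
  have hind : ∀ p : ℝ × ℝ, p.1 • S.indicator F (Complex.polarCoord.symm p) =
      (Complex.polarCoord.symm ⁻¹' S).indicator
        (fun p : ℝ × ℝ ↦ p.1 • F (Complex.polarCoord.symm p)) p := fun p ↦ by
    by_cases hp : Complex.polarCoord.symm p ∈ S
    · rw [indicator_of_mem hp, indicator_of_mem (mem_preimage.2 hp)]
    · rw [indicator_of_notMem hp, indicator_of_notMem (mt mem_preimage.1 hp), smul_zero]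
  rw [← integral_indicator hS, ← Complex.integral_comp_polarCoord_symm]
  simp_rw [hind]
  rw [setIntegral_indicator (hS.preimage hpolar.measurable),
    polarCoord_target_inter_preimage_annulus ha, Measure.volume_eq_prod, setIntegral_prod _ hint]
  refine setIntegral_congr_fun measurableSet_Ioo fun r _ ↦ ?_
  simp only [Complex.polarCoord_symm_eq_circleMap]
  rw [integral_smul, integral_Ioo_circleMap_eq_circleAverage, smul_smul, mul_comm r]

theorem Complex.volume_real_closedBall (a : ℂ) {r : ℝ} (hr : 0 ≤ r) :
    volume.real (closedBall a r) = π * r ^ 2 := by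
  rw [measureReal_def, Complex.volume_closedBall, ENNReal.toReal_mul, ENNReal.toReal_pow,
    ENNReal.toReal_ofReal hr, ENNReal.coe_toReal, NNReal.coe_real_pi, mul_comm]

theorem sq_norm_le_three_mul_circleAverage {h : ℂ → ℂ} (hh : DifferentiableOn ℂ h (ball 0 1))
    {w : ℂ} (hw : w ∈ closedBall (0 : ℂ) (1 / 2)) {r : ℝ} (hr : r ∈ Icc (3 / 4 : ℝ) (7 / 8)) :
    ‖h w‖ ^ 2 ≤ 3 * circleAverage (fun z ↦ ‖h z‖ ^ 2) 0 r := by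
  have hw' : dist w 0 ≤ 1 / 2 := hw
  have hsq : DiffContOnCl ℂ (fun z ↦ h z ^ 2) (ball 0 r) :=
    (hh.pow 2).diffContOnCl_ball (closedBall_subset_ball (by linarith [hr.2]))
  have hbound := hsq.norm_le_mul_circleAverage_norm (mem_ball.2 (by linarith [hr.1]))
  simp only [norm_pow] at hbound
  refine hbound.trans (mul_le_mul_of_nonneg_right ?_ (circleAverage_nonneg_of_nonneg
    fun z _ ↦ sq_nonneg _))
  rw [div_le_iff₀ (by linarith [hr.1])]
  linarith [hr.1]

theorem sq_norm_le_integral_annulus {h : ℂ → ℂ} (hh : DifferentiableOn ℂ h (ball 0 1))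
    {w : ℂ} (hw : w ∈ closedBall (0 : ℂ) (1 / 2)) :
    π / 16 * ‖h w‖ ^ 2 ≤ ∫ z in ball 0 (7 / 8) \ closedBall 0 (3 / 4), ‖h z‖ ^ 2 := by
  have hcont : ContinuousOn (fun z ↦ ‖h z‖ ^ 2) (closedBall 0 (7 / 8)) :=
    (hh.continuousOn.mono (closedBall_subset_ball (by norm_num))).norm.pow 2
  have havg : ContinuousOn (fun r ↦ (2 * π * r) • circleAverage (fun z ↦ ‖h z‖ ^ 2) 0 r)
      (Icc (3 / 4) (7 / 8)) := by
    refine (continuousOn_const.mul continuousOn_id).smul (ContinuousOn.circleAverage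
      (hcont.mono fun z hz ↦ ?_) fun r hr ↦ by linarith [hr.1])
    simpa using hz.2
  rw [integral_annulus_eq_integral_circleAverage (by norm_num) hcont]
  have hlower := setIntegral_ge_of_const_le_real (μ := volume) (c := π / 2 * ‖h w‖ ^ 2)
    measurableSet_Ioo (by simp) (fun r hr ↦ ?_)
    (havg.integrableOn_Icc.mono_set Ioo_subset_Icc_self)
  · rw [Real.volume_real_Ioo_of_le (by norm_num)] at hlower
    linarith
  · have hA : 0 ≤ circleAverage (fun z ↦ ‖h z‖ ^ 2) 0 r :=
      circleAverage_nonneg_of_nonneg fun z _ ↦ sq_nonneg _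
    calc π / 2 * ‖h w‖ ^ 2
        ≤ π / 2 * (3 * circleAverage (fun z ↦ ‖h z‖ ^ 2) 0 r) := by
          gcongr
          exact sq_norm_le_three_mul_circleAverage hh hw (Ioo_subset_Icc_self hr)
      _ = 2 * π * (3 / 4) * circleAverage (fun z ↦ ‖h z‖ ^ 2) 0 r := by ring
      _ ≤ (2 * π * r) • circleAverage (fun z ↦ ‖h z‖ ^ 2) 0 r := by
          rw [smul_eq_mul]
          gcongr
          exact hr.1.le

theorem integral_ball_sq_norm_le {h : ℂ → ℂ} (hh : DifferentiableOn ℂ h (ball 0 1))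
    (hint : IntegrableOn (fun z ↦ ‖h z‖ ^ 2) (ball 0 1)) :
    ∫ z in ball 0 1, ‖h z‖ ^ 2 ≤ 5 * ∫ z in ball 0 1 \ closedBall 0 (1 / 2), ‖h z‖ ^ 2 := by
  set T := ∫ z in ball 0 1 \ closedBall 0 (1 / 2), ‖h z‖ ^ 2
  have hannulus : ∫ z in ball 0 (7 / 8) \ closedBall 0 (3 / 4), ‖h z‖ ^ 2 ≤ T :=
    setIntegral_mono_set (hint.mono_set sdiff_subset) (.of_forall fun _ ↦ sq_nonneg _)
      (sdiff_subset_sdiff (ball_subset_ball (by norm_num))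
        (closedBall_subset_closedBall (by norm_num))).eventuallyLE
  have hinner : ∫ z in closedBall 0 (1 / 2), ‖h z‖ ^ 2 ≤ 4 * T := by
    calc ∫ z in closedBall 0 (1 / 2), ‖h z‖ ^ 2
        ≤ ∫ z in closedBall (0 : ℂ) (1 / 2), 16 / π * T := by
          refine setIntegral_mono_on (hint.mono_set (closedBall_subset_ball (by norm_num)))
            (integrableOn_const measure_closedBall_lt_top.ne) measurableSet_closedBall
            fun w hw ↦ ?_
          rw [div_mul_eq_mul_div, le_div_iff₀ pi_pos, mul_comm]
          linarith [sq_norm_le_integral_annulus hh hw]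
      _ = 4 * T := by
          rw [setIntegral_const, Complex.volume_real_closedBall 0 (by norm_num), smul_eq_mul]
          field_simp
          ring
  rw [← integral_inter_add_sdiff measurableSet_closedBall hint,
    inter_eq_right.2 (closedBall_subset_ball (by norm_num : (1 / 2 : ℝ) < 1))]
  linarith

end DiscEstimate

theorem MeasureTheory.Lp.norm_sq_eq_integral {α 𝕜 : Type*} [RCLike 𝕜] [MeasurableSpace α]
    {μ : Measure α} (u : Lp 𝕜 2 μ) : ‖u‖ ^ 2 = ∫ a, ‖u a‖ ^ 2 ∂μ := by
  rw [← inner_self_eq_norm_sq (𝕜 := 𝕜), L2.inner_def, ← integral_re (L2.integrable_inner u u)]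
  exact integral_congr_ae (.of_forall fun a ↦ inner_self_eq_norm_sq (u a))

/-- Lebesgue measure restricted to the unit disc. -/
noncomputable def muD : Measure ℂ := volume.restrict (ball 0 1)

/-- The subspace of `L²(D)` of (classes of) holomorphic functions. -/
noncomputable def bergmanSubspace : Submodule ℂ (Lp ℂ 2 muD) where
  carrier := {f | ∃ g : ℂ → ℂ, DifferentiableOn ℂ g (ball 0 1) ∧ ∀ᵐ ζ ∂muD, f ζ = g ζ}
  add_mem' := by
    rintro a b ⟨g₁, hg₁, e₁⟩ ⟨g₂, hg₂, e₂⟩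
    refine ⟨g₁ + g₂, hg₁.add hg₂, ?_⟩
    filter_upwards [Lp.coeFn_add a b, e₁, e₂] with ζ h h₁ h₂
    rw [h, Pi.add_apply, h₁, h₂]
    rfl
  zero_mem' := by
    refine ⟨0, differentiableOn_const 0, ?_⟩
    filter_upwards [Lp.coeFn_zero ℂ 2 muD] with ζ h
    rw [h]
  smul_mem' := by
    rintro c a ⟨g, hg, e⟩
    refine ⟨c • g, hg.const_smul c, ?_⟩
    filter_upwards [Lp.coeFn_smul c a, e] with ζ h h₁
    rw [h, Pi.smul_apply, h₁]
    rfl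

instance : CompleteSpace (bergmanSubspace.topologicalClosure : Submodule ℂ (Lp ℂ 2 muD)) :=
  IsClosed.completeSpace_coe (hs := Submodule.isClosed_topologicalClosure _)

/-- The Bergman projection: the orthogonal projection of `L²(D)` onto the (closed)
subspace of holomorphic functions. -/
noncomputable def bergmanProjection : Lp ℂ 2 muD →L[ℂ] bergmanSubspace.topologicalClosure :=
  Submodule.orthogonalProjectionOnto bergmanSubspace.topologicalClosure

theorem sq_norm_le_five_mul_sq_norm_sub {f g : Lp ℂ 2 muD}
    (hf : ∀ᵐ ζ ∂muD, ζ ∉ closedBall (0 : ℂ) (1 / 2) → f ζ = 0) (hg : g ∈ bergmanSubspace) :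
    ‖g‖ ^ 2 ≤ 5 * ‖f - g‖ ^ 2 := by
  obtain ⟨h, hh, hgh⟩ := hg
  have hnorm : ∀ᵐ ζ ∂muD, ‖g ζ‖ ^ 2 = ‖h ζ‖ ^ 2 := hgh.mono fun ζ hζ ↦ by rw [hζ]
  have hint : IntegrableOn (fun z ↦ ‖h z‖ ^ 2) (ball 0 1) :=
    ((Lp.memLp g).integrable_norm_pow two_ne_zero).congr hnorm
  set S : Set ℂ := ball 0 1 \ closedBall 0 (1 / 2)
  have hS : MeasurableSet S := measurableSet_ball.diff measurableSet_closedBall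
  have hannulus : ∫ z in S, ‖h z‖ ^ 2 ≤ ‖f - g‖ ^ 2 := by
    have hrestrict : muD.restrict S = volume.restrict S := by
      rw [muD, Measure.restrict_restrict hS, Set.inter_eq_self_of_subset_left Set.sdiff_subset]
    have hsub : ∀ᵐ ζ ∂muD.restrict S, ‖h ζ‖ ^ 2 = ‖(f - g) ζ‖ ^ 2 := by
      filter_upwards [ae_restrict_of_ae hgh, ae_restrict_of_ae (Lp.coeFn_sub f g),
        ae_restrict_of_ae hf, ae_restrict_mem hS] with ζ hgζ hsubζ hfζ hζ
      rw [hsubζ, Pi.sub_apply, hfζ hζ.2, hgζ, zero_sub, norm_neg]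
    rw [← hrestrict, integral_congr_ae hsub, Lp.norm_sq_eq_integral]
    exact setIntegral_le_integral ((Lp.memLp (f - g)).integrable_norm_pow two_ne_zero)
      (.of_forall fun _ ↦ sq_nonneg _)
  calc ‖g‖ ^ 2 = ∫ z in ball 0 1, ‖h z‖ ^ 2 := by
        rw [Lp.norm_sq_eq_integral]
        exact integral_congr_ae hnorm
    _ ≤ 5 * ∫ z in S, ‖h z‖ ^ 2 := integral_ball_sq_norm_le hh hint
    _ ≤ 5 * ‖f - g‖ ^ 2 := by gcongr

theorem norm_le_four_mul_norm_sub {f g : Lp ℂ 2 muD}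
    (hf : ∀ᵐ ζ ∂muD, ζ ∉ closedBall (0 : ℂ) (1 / 2) → f ζ = 0)
    (hg : g ∈ bergmanSubspace.topologicalClosure) : ‖f‖ ≤ 4 * ‖f - g‖ := by
  suffices bergmanSubspace.topologicalClosure ≤ {g | ‖f‖ ≤ 4 * ‖f - g‖} from this hg
  refine closure_minimal (fun g hg ↦ ?_) (isClosed_le continuous_const (by fun_prop))
  have hg3 : ‖g‖ ≤ 3 * ‖f - g‖ := by
    refine (pow_le_pow_iff_left₀ (norm_nonneg _) (by positivity) two_ne_zero).1 ?_
    nlinarith [sq_norm_le_five_mul_sq_norm_sub hf hg]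
  calc ‖f‖ ≤ ‖f - g‖ + ‖g‖ := norm_le_norm_sub_add f g
    _ ≤ 4 * ‖f - g‖ := by linarith

/-- There is an absolute constant `a > 0` such that every `f ∈ L²(D)` supported in the
closed disc of radius `1/2` satisfies `∫_D |f - B f|² ≥ a ∫_D |f|²`, where `B` is the
Bergman projection. -/
theorem bergman_projection_defect :
    ∃ a : ℝ, 0 < a ∧ ∀ f : Lp ℂ 2 muD,
      (∀ᵐ ζ ∂muD, ζ ∉ closedBall (0 : ℂ) (1 / 2) → f ζ = 0) →
      a * ‖f‖ ^ 2 ≤ ‖f - (bergmanProjection f : Lp ℂ 2 muD)‖ ^ 2 := by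
  refine ⟨1 / 16, by norm_num, fun f hf ↦ ?_⟩
  calc 1 / 16 * ‖f‖ ^ 2
      ≤ 1 / 16 * (4 * ‖f - (bergmanProjection f : Lp ℂ 2 muD)‖) ^ 2 := by
        gcongr
        exact norm_le_four_mul_norm_sub hf (bergmanProjection f).2
    _ = ‖f - (bergmanProjection f : Lp ℂ 2 muD)‖ ^ 2 := by ring
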